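/- arXiv:2502.06096 — 3 statements merged into one kernel-verified Lean document; each statement's English description precedes it below -/
import Mathlib

section
/- Universal threshold for the e-process-based localization statistic: for every t ∈ ℕ, every F₀ ∈ 𝒫₀, every F₁ ∈ 𝒫₁, and every α ∈ (0,1), P_{F₀,t,F₁}(M_t ≥ 2/α) ≤ α. This holds for any stopping time τ, any estimator T̂, and any forward and backward delay e-processes, with no further assumptions on the classes 𝒫₀, 𝒫₁. -/
/-!
On `{M_t ≥ 2/α}` the statistic cannot be the constant `1 < 2/α`, so either `t < T̂` and the
forward e-process `R⁽ᵗ⁾` reaches `2/α` at some time `≥ t`, or `T̂ < t` and the backward e-process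
`S⁽ᵗ⁾` reaches `2/α` at some time in `[1, t)`. Under `P_{F₀,t,F₁}` the observations from `t` on
are i.i.d. `F₁` and those before `t` are i.i.d. `F₀`, so Ville's inequality for e-processes
(optional stopping at the first time the process reaches `2/α`) bounds each of the two
probabilities by `α/2`.
-/

open MeasureTheory ProbabilityTheory Filter Set
open scoped ENNReal NNReal

namespace SeqChange

variable {𝒳 : Type*} [MeasurableSpace 𝒳]

/-- The σ-algebra on the sequence space generated by the coordinates with indices in `s`. -/
def coordSigma (𝒳 : Type*) [MeasurableSpace 𝒳] (s : Set ℕ) : MeasurableSpace (ℕ → 𝒳) :=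
  ⨆ i ∈ s, MeasurableSpace.comap (fun ω : ℕ → 𝒳 => ω i) inferInstance

/-- The natural filtration `σ(X₁, …, Xₙ)` of the observation sequence (observations are
indexed from 1; coordinate 0 is unused). -/
def natFilt (𝒳 : Type*) [MeasurableSpace 𝒳] (n : ℕ) : MeasurableSpace (ℕ → 𝒳) :=
  coordSigma 𝒳 {i | 1 ≤ i ∧ i ≤ n}

/-- `τ` is a stopping time with respect to the natural filtration of the observation
sequence, taking values in `ℕ ∪ {∞}`. -/
def IsStoppingTimeSeq (τ : (ℕ → 𝒳) → ℕ∞) : Prop :=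
  ∀ n : ℕ, MeasurableSet[natFilt 𝒳 n] {ω | τ ω ≤ (n : ℕ∞)}

/-- `P` is the joint law of a sequence of independent observations `X₁, X₂, …` with
`Xₙ ~ ν n` for every `n ≥ 1`: a probability measure whose finite-dimensional
distributions on the coordinates with indices `≥ 1` are the corresponding products. -/
def IsProductLaw (P : Measure (ℕ → 𝒳)) (ν : ℕ → Measure 𝒳) : Prop :=
  IsProbabilityMeasure P ∧
    ∀ s : Finset ℕ, (∀ i ∈ s, 1 ≤ i) → ∀ A : ℕ → Set 𝒳, (∀ i, MeasurableSet (A i)) →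
      P {ω | ∀ i ∈ s, ω i ∈ A i} = ∏ i ∈ s, ν i (A i)

/-- `P` is the law `P_{F₀,T,F₁}`: independent coordinates, `Xₙ ~ F₀` for `n < T` and
`Xₙ ~ F₁` for `n ≥ T`. -/
def IsChangeLaw (P : Measure (ℕ → 𝒳)) (F₀ F₁ : Measure 𝒳) (T : ℕ) : Prop :=
  IsProductLaw P (fun n => if n < T then F₀ else F₁)

/-- `P` is the law `P_{F₀,∞}`: all coordinates i.i.d. `F₀` (no change ever occurs). -/
def IsNoChangeLaw (P : Measure (ℕ → 𝒳)) (F₀ : Measure 𝒳) : Prop :=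
  IsProductLaw P (fun _ => F₀)

/-- Under `Q`, the coordinates with indices in `I` are i.i.d. with law `ν`. -/
def IsIIDOn (Q : Measure (ℕ → 𝒳)) (ν : Measure 𝒳) (I : Set ℕ) : Prop :=
  IsProbabilityMeasure Q ∧
    ∀ s : Finset ℕ, (↑s ⊆ I) → ∀ A : ℕ → Set 𝒳, (∀ i, MeasurableSet (A i)) →
      Q {ω | ∀ i ∈ s, ω i ∈ A i} = ∏ i ∈ s, ν (A i)

/-- Forward filtration `σ(X_t, …, X_n)`. -/
def fwdFilt (𝒳 : Type*) [MeasurableSpace 𝒳] (t n : ℕ) : MeasurableSpace (ℕ → 𝒳) :=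
  coordSigma 𝒳 {i | t ≤ i ∧ i ≤ n}

/-- Backward filtration `σ(X_n, …, X_{t-1})`. -/
def bwdFilt (𝒳 : Type*) [MeasurableSpace 𝒳] (t n : ℕ) : MeasurableSpace (ℕ → 𝒳) :=
  coordSigma 𝒳 {i | n ≤ i ∧ i < t}

/-- A forward `t`-delay e-process under the class `𝒫₁`: a nonnegative process
`(R n)_{n ≥ t}` adapted to the forward filtration `σ(X_t, …, X_n)` such that for every
`F₁ ∈ 𝒫₁`, every law `Q` under which `X_t, X_{t+1}, …` are i.i.d. `F₁`, and every
stopping time `κ ≥ t` of the forward filtration, `E_Q[R_κ] ≤ 1`. -/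
def IsForwardEProcess (𝒫₁ : Set (Measure 𝒳)) (t : ℕ) (R : ℕ → (ℕ → 𝒳) → ℝ≥0∞) : Prop :=
  (∀ n, t ≤ n → Measurable[fwdFilt 𝒳 t n] (R n)) ∧
    ∀ F₁ ∈ 𝒫₁, ∀ Q : Measure (ℕ → 𝒳), IsIIDOn Q F₁ {i | t ≤ i} →
      ∀ κ : (ℕ → 𝒳) → ℕ, (∀ ω, t ≤ κ ω) →
        (∀ n, MeasurableSet[fwdFilt 𝒳 t n] {ω | κ ω ≤ n}) →
        ∫⁻ ω, R (κ ω) ω ∂Q ≤ 1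

/-- A backward `t`-delay e-process under the class `𝒫₀`: a nonnegative process
`(S n)_{1 ≤ n < t}` adapted to the backward filtration `σ(X_n, …, X_{t-1})` such that for
every `F₀ ∈ 𝒫₀`, every law `Q` under which `X₁, …, X_{t-1}` are i.i.d. `F₀`, and every
stopping time `κ` of the backward filtration with `1 ≤ κ < t`, `E_Q[S_κ] ≤ 1`. -/
def IsBackwardEProcess (𝒫₀ : Set (Measure 𝒳)) (t : ℕ) (S : ℕ → (ℕ → 𝒳) → ℝ≥0∞) : Prop :=
  (∀ n, 1 ≤ n → n < t → Measurable[bwdFilt 𝒳 t n] (S n)) ∧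
    ∀ F₀ ∈ 𝒫₀, ∀ Q : Measure (ℕ → 𝒳), IsIIDOn Q F₀ {i | 1 ≤ i ∧ i < t} →
      ∀ κ : (ℕ → 𝒳) → ℕ, (∀ ω, 1 ≤ κ ω ∧ κ ω < t) →
        (∀ n, MeasurableSet[bwdFilt 𝒳 t n] {ω | n ≤ κ ω}) →
        ∫⁻ ω, S (κ ω) ω ∂Q ≤ 1

/-- The localization statistic `M_t` built from the estimator `T̂`, forward e-processes `R`
and backward e-processes `S`: `M_t = R^{(t)}_{T̂ - 1}` if `t < T̂ ≤ τ < ∞`, `M_t = 1` if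
`t = T̂ ≤ τ < ∞`, `M_t = S^{(t)}_{T̂}` if `T̂ < t ≤ τ < ∞`, and `M_t = -∞` if `t > τ` or
`τ = ∞`. -/
noncomputable def eStat (τ : (ℕ → 𝒳) → ℕ∞) (That : (ℕ → 𝒳) → ℕ)
    (R S : ℕ → ℕ → (ℕ → 𝒳) → ℝ≥0∞) (t : ℕ) (ω : ℕ → 𝒳) : EReal :=
  if (t : ℕ∞) ≤ τ ω ∧ τ ω ≠ ⊤ then
    if t < That ω then ((R t (That ω - 1) ω : ℝ≥0∞) : EReal)
    else if t = That ω then 1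
    else ((S t (That ω) ω : ℝ≥0∞) : EReal)
  else ⊥

end SeqChange

namespace MeasureTheory

variable {Ω : Type*} {𝓖 : ℕ → MeasurableSpace Ω} {X : ℕ → Ω → ℝ≥0∞} {N : ℕ}

lemma measurableSet_exists_le_le_apply (h𝓖 : Monotone 𝓖)
    (hX : ∀ n ≤ N, Measurable[𝓖 n] (X n)) (c : ℝ≥0∞) {i : ℕ} (hi : i ≤ N) :
    MeasurableSet[𝓖 i] {ω | ∃ j ≤ i, c ≤ X j ω} := by
  have hunion : {ω | ∃ j ≤ i, c ≤ X j ω} = ⋃ j ∈ Set.Iic i, X j ⁻¹' Set.Ici c := by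
    ext ω; simp
  rw [hunion]
  exact .biUnion (Set.to_countable _) fun j hj => h𝓖 hj _ (hX j (hj.trans hi) measurableSet_Ici)

lemma measurableSet_hittingBtwn_le (h𝓖 : Monotone 𝓖) (hX : ∀ n ≤ N, Measurable[𝓖 n] (X n))
    (c : ℝ≥0∞) (i : ℕ) :
    MeasurableSet[𝓖 i] {ω | hittingBtwn X (Set.Ici c) 0 N ω ≤ i} := by
  rcases lt_or_ge i N with hi | hi
  · convert measurableSet_exists_le_le_apply h𝓖 hX c hi.le using 2 with ω
    simp [hittingBtwn_le_iff_of_lt i hi]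
  · simp only [(hittingBtwn_le _).trans hi, Set.ofPred_true, MeasurableSet.univ]

theorem ville_of_lintegral_stopped_le {mΩ : MeasurableSpace Ω} {Q : Measure Ω} {C : ℝ≥0∞}
    (h𝓖 : Monotone 𝓖) (hle : 𝓖 N ≤ mΩ) (hX : ∀ n ≤ N, Measurable[𝓖 n] (X n))
    (hstop : ∀ κ : Ω → ℕ, (∀ n, MeasurableSet[𝓖 n] {ω | κ ω ≤ n}) → (∀ ω, κ ω ≤ N) →
      ∫⁻ ω, X (κ ω) ω ∂Q ≤ C)
    (c : ℝ≥0∞) :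
    c * Q {ω | ∃ n ≤ N, c ≤ X n ω} ≤ C := by
  set A := {ω | ∃ n ≤ N, c ≤ X n ω}
  set κ := hittingBtwn X (Set.Ici c) 0 N
  have hcross : ∀ ω ∈ A, c ≤ X (κ ω) ω := fun ω ⟨n, hn, hc⟩ =>
    hittingBtwn_mem_set (u := X) (s := Set.Ici c) ⟨n, ⟨Nat.zero_le n, hn⟩, hc⟩
  calc c * Q A = ∫⁻ _ in A, c ∂Q := (setLIntegral_const _ c).symm
    _ ≤ ∫⁻ ω in A, X (κ ω) ω ∂Q :=
        setLIntegral_mono' (hle _ (measurableSet_exists_le_le_apply h𝓖 hX c le_rfl)) hcross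
    _ ≤ ∫⁻ ω, X (κ ω) ω ∂Q := setLIntegral_le_lintegral _ _
    _ ≤ C := hstop κ (measurableSet_hittingBtwn_le h𝓖 hX c) fun _ => hittingBtwn_le _

end MeasureTheory

namespace SeqChange

variable {𝒳 : Type*}

lemma setOf_le_eStat_subset {τ : (ℕ → 𝒳) → ℕ∞} {That : (ℕ → 𝒳) → ℕ}
    (hThat : ∀ ω, τ ω ≠ ⊤ → 1 ≤ That ω) (R S : ℕ → ℕ → (ℕ → 𝒳) → ℝ≥0∞) (t : ℕ) {c : ℝ≥0∞}
    (hc : 1 < c) :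
    {ω | (c : EReal) ≤ eStat τ That R S t ω} ⊆
      {ω | ∃ n, t ≤ n ∧ c ≤ R t n ω} ∪ {ω | ∃ n, 1 ≤ n ∧ n < t ∧ c ≤ S t n ω} := by
  intro ω hω
  simp only [Set.mem_ofPred_eq, eStat] at hω
  split_ifs at hω with hτ hlt heq
  · exact Or.inl ⟨That ω - 1, by omega, EReal.coe_ennreal_le_coe_ennreal_iff.mp hω⟩
  · exact absurd hω (not_le.mpr (by exact_mod_cast hc))
  · exact Or.inr ⟨That ω, hThat ω hτ.2, by omega, EReal.coe_ennreal_le_coe_ennreal_iff.mp hω⟩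
  · exact absurd hω (not_le.mpr (EReal.bot_lt_coe_ennreal _))

variable [MeasurableSpace 𝒳]

lemma coordSigma_le_pi (s : Set ℕ) : coordSigma 𝒳 s ≤ MeasurableSpace.pi :=
  iSup₂_le fun i _ => (measurable_pi_apply i).comap_le

lemma coordSigma_mono {s u : Set ℕ} (h : s ⊆ u) : coordSigma 𝒳 s ≤ coordSigma 𝒳 u :=
  biSup_mono h

lemma fwdFilt_mono (t : ℕ) : Monotone (fwdFilt 𝒳 t) :=
  fun _ _ h => coordSigma_mono fun _ hi => ⟨hi.1, hi.2.trans h⟩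

lemma bwdFilt_anti (t : ℕ) : Antitone (bwdFilt 𝒳 t) :=
  fun _ _ h => coordSigma_mono fun _ hi => ⟨h.trans hi.1, hi.2⟩

lemma IsProductLaw.isIIDOn {P : Measure (ℕ → 𝒳)} {ν : ℕ → Measure 𝒳} (hP : IsProductLaw P ν)
    {μ : Measure 𝒳} {I : Set ℕ} (hI : ∀ i ∈ I, 1 ≤ i ∧ ν i = μ) : IsIIDOn P μ I := by
  refine ⟨hP.1, fun s hs A hA => ?_⟩
  rw [hP.2 s (fun i hi => (hI i (hs hi)).1) A hA]
  exact Finset.prod_congr rfl fun i hi => by rw [(hI i (hs hi)).2]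

lemma IsChangeLaw.isIIDOn_pre {P : Measure (ℕ → 𝒳)} {F₀ F₁ : Measure 𝒳} {t : ℕ}
    (hP : IsChangeLaw P F₀ F₁ t) : IsIIDOn P F₀ {i | 1 ≤ i ∧ i < t} :=
  IsProductLaw.isIIDOn hP fun _ hi => ⟨hi.1, if_pos hi.2⟩

lemma IsChangeLaw.isIIDOn_post {P : Measure (ℕ → 𝒳)} {F₀ F₁ : Measure 𝒳} {t : ℕ}
    (hP : IsChangeLaw P F₀ F₁ t) (ht : 1 ≤ t) : IsIIDOn P F₁ {i | t ≤ i} :=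
  IsProductLaw.isIIDOn hP fun _ hi => ⟨ht.trans hi, if_neg (not_lt.mpr hi)⟩

theorem IsForwardEProcess.ville {𝒫₁ : Set (Measure 𝒳)} {t : ℕ} {R : ℕ → (ℕ → 𝒳) → ℝ≥0∞}
    (hR : IsForwardEProcess 𝒫₁ t R) {F₁ : Measure 𝒳} (hF₁ : F₁ ∈ 𝒫₁) {Q : Measure (ℕ → 𝒳)}
    (hQ : IsIIDOn Q F₁ {i | t ≤ i}) (c : ℝ≥0∞) :
    c * Q {ω | ∃ n, t ≤ n ∧ c ≤ R n ω} ≤ 1 := by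
  have hstop (N : ℕ) : c * Q {ω | ∃ n ≤ N, c ≤ R (t + n) ω} ≤ 1 := by
    refine ville_of_lintegral_stopped_le (𝓖 := fun n => fwdFilt 𝒳 t (t + n))
      (fun _ _ h => fwdFilt_mono t (by omega)) (coordSigma_le_pi _)
      (fun n _ => hR.1 (t + n) (by omega)) (fun κ hκ _ => ?_) c
    refine hR.2 F₁ hF₁ Q hQ (fun ω => t + κ ω) (fun _ => by omega) fun n => ?_
    rcases lt_or_ge n t with hn | hn
    · convert @MeasurableSet.empty _ (fwdFilt 𝒳 t n)
      ext ω; simp only [Set.mem_ofPred_eq, Set.mem_empty_iff_false, iff_false]; omega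
    · have hκ' := hκ (n - t)
      rw [Nat.add_sub_cancel' hn] at hκ'
      convert hκ' using 1
      ext ω; simp only [Set.mem_ofPred_eq]; omega
  have hunion : {ω | ∃ n, t ≤ n ∧ c ≤ R n ω} = ⋃ N, {ω | ∃ n ≤ N, c ≤ R (t + n) ω} := by
    ext ω
    simp only [Set.mem_ofPred_eq, Set.mem_iUnion]
    constructor
    · rintro ⟨n, hn, hc⟩
      exact ⟨n - t, n - t, le_rfl, by rwa [Nat.add_sub_cancel' hn]⟩
    · rintro ⟨_, n, _, hc⟩
      exact ⟨t + n, by omega, hc⟩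
  have hmono : Monotone fun N => {ω | ∃ n ≤ N, c ≤ R (t + n) ω} :=
    fun _ _ h _ ⟨n, hn, hc⟩ => ⟨n, hn.trans h, hc⟩
  rw [hunion, hmono.measure_iUnion, ENNReal.mul_iSup]
  exact iSup_le hstop

theorem IsBackwardEProcess.ville {𝒫₀ : Set (Measure 𝒳)} {t : ℕ} {S : ℕ → (ℕ → 𝒳) → ℝ≥0∞}
    (hS : IsBackwardEProcess 𝒫₀ t S) {F₀ : Measure 𝒳} (hF₀ : F₀ ∈ 𝒫₀) {Q : Measure (ℕ → 𝒳)}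
    (hQ : IsIIDOn Q F₀ {i | 1 ≤ i ∧ i < t}) (c : ℝ≥0∞) :
    c * Q {ω | ∃ n, 1 ≤ n ∧ n < t ∧ c ≤ S n ω} ≤ 1 := by
  rcases lt_or_ge t 2 with ht | ht
  · have hempty : {ω | ∃ n, 1 ≤ n ∧ n < t ∧ c ≤ S n ω} = ∅ := by
      ext ω; simp only [Set.mem_ofPred_eq, Set.mem_empty_iff_false, iff_false]; omega
    simp [hempty]
  have hsub : {ω | ∃ n, 1 ≤ n ∧ n < t ∧ c ≤ S n ω} ⊆ {ω | ∃ n ≤ t - 2, c ≤ S (t - 1 - n) ω} :=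
    fun ω ⟨n, h1, h2, hc⟩ => ⟨t - 1 - n, by omega, by rwa [show t - 1 - (t - 1 - n) = n by omega]⟩
  refine (mul_le_mul_right (measure_mono hsub) c).trans ?_
  -- run the backward process in reversed time: step `n` is the index `t - 1 - n`
  refine ville_of_lintegral_stopped_le (𝓖 := fun n => bwdFilt 𝒳 t (t - 1 - n))
    (fun _ _ h => bwdFilt_anti t (by omega)) (coordSigma_le_pi _)
    (fun n hn => hS.1 _ (by omega) (by omega)) (fun κ hκ hκN => ?_) c
  refine hS.2 F₀ hF₀ Q hQ (fun ω => t - 1 - κ ω) (fun ω => by have := hκN ω; omega) fun n => ?_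
  rcases lt_or_ge n t with hn | hn
  · have hκ' := hκ (t - 1 - n)
    rw [show t - 1 - (t - 1 - n) = n by omega] at hκ'
    convert hκ' using 1
    ext ω; have := hκN ω; simp only [Set.mem_ofPred_eq]; omega
  · convert @MeasurableSet.empty _ (bwdFilt 𝒳 t n)
    ext ω; simp only [Set.mem_ofPred_eq, Set.mem_empty_iff_false, iff_false]; omega

theorem universal_threshold_general
    {𝒳 : Type*} [MeasurableSpace 𝒳]
    (𝒫₀ 𝒫₁ : Set (Measure 𝒳))
    (τ : (ℕ → 𝒳) → ℕ∞)
    (That : (ℕ → 𝒳) → ℕ)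
    (hThat : ∀ ω, τ ω ≠ ⊤ → 1 ≤ That ω ∧ (That ω : ℕ∞) ≤ τ ω)
    (R S : ℕ → ℕ → (ℕ → 𝒳) → ℝ≥0∞)
    (hR : ∀ t : ℕ, 1 ≤ t → IsForwardEProcess 𝒫₁ t (R t))
    (hS : ∀ t : ℕ, 1 ≤ t → IsBackwardEProcess 𝒫₀ t (S t))
    (α : ℝ) (hα : α ∈ Set.Ioo (0 : ℝ) 1)
    (t : ℕ) (ht : 1 ≤ t)
    (F₀ : Measure 𝒳) (hF₀ : F₀ ∈ 𝒫₀) (F₁ : Measure 𝒳) (hF₁ : F₁ ∈ 𝒫₁)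
    (P : Measure (ℕ → 𝒳)) (hP : IsChangeLaw P F₀ F₁ t) :
    P {ω | ((2 / α : ℝ) : EReal) ≤ eStat τ That R S t ω} ≤ ENNReal.ofReal α := by
  obtain ⟨hα0, hα1⟩ := hα
  set c := ENNReal.ofReal (2 / α)
  have hc : 1 < c := ENNReal.one_lt_ofReal.mpr ((one_lt_div hα0).mpr (by linarith))
  have hthreshold : ((2 / α : ℝ) : EReal) = (c : EReal) := by
    rw [EReal.coe_ennreal_ofReal, max_eq_left (by positivity)]
  have hfwd := ENNReal.le_inv_iff_mul_le.mpr
    (mul_comm c _ ▸ (hR t ht).ville hF₁ (hP.isIIDOn_post ht) c)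
  have hbwd := ENNReal.le_inv_iff_mul_le.mpr
    (mul_comm c _ ▸ (hS t ht).ville hF₀ hP.isIIDOn_pre c)
  calc P {ω | ((2 / α : ℝ) : EReal) ≤ eStat τ That R S t ω}
      ≤ P ({ω | ∃ n, t ≤ n ∧ c ≤ R t n ω} ∪ {ω | ∃ n, 1 ≤ n ∧ n < t ∧ c ≤ S t n ω}) :=
        measure_mono (hthreshold ▸ setOf_le_eStat_subset (fun ω h => (hThat ω h).1) R S t hc)
    _ ≤ c⁻¹ + c⁻¹ := (measure_union_le _ _).trans (add_le_add hfwd hbwd)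
    _ = ENNReal.ofReal α := by
        rw [← ENNReal.ofReal_inv_of_pos (by positivity), inv_div,
          ← ENNReal.ofReal_add (by positivity) (by positivity), add_halves]

/-- Universal threshold for the e-process-based localization statistic:
for every `t`, every `F₀ ∈ 𝒫₀`, `F₁ ∈ 𝒫₁` and every `α ∈ (0,1)`,
`P_{F₀,t,F₁}(M_t ≥ 2/α) ≤ α`, for any stopping time `τ`, any estimator `T̂` and any
forward/backward delay e-processes, with no further assumptions on `𝒫₀, 𝒫₁`. -/
theorem universal_threshold
    {𝒳 : Type*} [MeasurableSpace 𝒳]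
    (𝒫₀ 𝒫₁ : Set (Measure 𝒳)) (hdisj : Disjoint 𝒫₀ 𝒫₁)
    (τ : (ℕ → 𝒳) → ℕ∞) (hτ : IsStoppingTimeSeq τ)
    (That : (ℕ → 𝒳) → ℕ)
    (hThat : ∀ ω, τ ω ≠ ⊤ → 1 ≤ That ω ∧ (That ω : ℕ∞) ≤ τ ω)
    (R S : ℕ → ℕ → (ℕ → 𝒳) → ℝ≥0∞)
    (hR : ∀ t : ℕ, 1 ≤ t → IsForwardEProcess 𝒫₁ t (R t))
    (hS : ∀ t : ℕ, 1 ≤ t → IsBackwardEProcess 𝒫₀ t (S t))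
    (α : ℝ) (hα : α ∈ Set.Ioo (0 : ℝ) 1)
    (t : ℕ) (ht : 1 ≤ t)
    (F₀ : Measure 𝒳) (hF₀ : F₀ ∈ 𝒫₀) (F₁ : Measure 𝒳) (hF₁ : F₁ ∈ 𝒫₁)
    (P : Measure (ℕ → 𝒳)) (hP : IsChangeLaw P F₀ F₁ t) :
    P {ω | ((2 / α : ℝ) : EReal) ≤ eStat τ That R S t ω} ≤ ENNReal.ofReal α :=
  universal_threshold_general 𝒫₀ 𝒫₁ τ That hThat R S hR hS α hα t ht F₀ hF₀ F₁ hF₁ P hP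

end SeqChange
end

section
/- If (P₀*, P₁*) is a least favorable distribution pair in terms of risk for testing 𝒫₀ versus 𝒫₁, then Assumption 1 holds with F₀* = P₀* for the CUSUM change detector built from the likelihood ratio of P₁* to P₀*: for every P₀ ∈ 𝒫₀ and every t ∈ ℕ, P_{P₀,∞}(τ_cs ≥ t) ≥ P_{P₀*,∞}(τ_cs ≥ t), so that inf_{P₀∈𝒫₀} P_{P₀,∞}(τ_cs ≥ t) ≥ P_{P₀*,∞}(τ_cs ≥ t) for all t ∈ ℕ. -/
open MeasureTheory ProbabilityTheory Filter Set
open scoped ENNReal NNReal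

namespace SeqChange

variable {𝒳 : Type*} [MeasurableSpace 𝒳]

/-- The CUSUM stopping time built from the likelihood ratio `p₁*/p₀*` with threshold `A`:
`τ_cs := inf{n ≥ 1 : max_{1≤j≤n} ∏_{i=j}^{n} p₁*(X_i)/p₀*(X_i) ≥ A}`. -/
noncomputable def cusumTimeE (p₀ p₁ : 𝒳 → ℝ≥0∞) (A : ℝ≥0∞) (ω : ℕ → 𝒳) : ℕ∞ :=
  sInf {n : ℕ∞ | ∃ m : ℕ, 1 ≤ m ∧ n = (m : ℕ∞) ∧
    ∃ j : ℕ, 1 ≤ j ∧ j ≤ m ∧ A ≤ ∏ i ∈ Finset.Icc j m, p₁ (ω i) / p₀ (ω i)}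

/-! For the tests `ℓ > η` with `ℓ = p₁*/p₀*`, the least-favourable property says that the law of
`ℓ` under `P₀*` stochastically dominates its law under any `P₀ ∈ 𝒫₀`. Stochastic dominance is
preserved by independent products, and the event `τ_cs ≤ k` is an upper set in the vector
`(ℓ(X₁), …, ℓ(X_k))` of likelihood ratios. Hence no alarm before time `t` is least likely under
`P₀*`. -/

lemma _root_.IsUpperSet.eq_Ioi_or_eq_Ici_sInf {α : Type*} [CompleteLinearOrder α] {U : Set α}
    (hU : IsUpperSet U) : U = Ioi (sInf U) ∨ U = Ici (sInf U) := by
  by_cases hmem : sInf U ∈ U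
  · exact Or.inr (Subset.antisymm (fun x hx => sInf_le hx) fun x hx => hU hx hmem)
  · refine Or.inl (Subset.antisymm (fun x hx => (sInf_le hx).lt_of_ne ?_) fun x hx => ?_)
    · rintro rfl; exact hmem hx
    · obtain ⟨u, hu, hux⟩ := sInf_lt_iff.1 hx
      exact hU hux.le hu

def StochasticallyLE {α : Type*} [MeasurableSpace α] [Preorder α] (ν ν' : Measure α) : Prop :=
  ∀ U : Set α, IsUpperSet U → MeasurableSet U → ν U ≤ ν' U

lemma measure_Ici_le_of_measure_Ioi_le {ν ν' : Measure ℝ≥0∞} [IsProbabilityMeasure ν]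
    [IsProbabilityMeasure ν'] (h : ∀ a, ν (Ioi a) ≤ ν' (Ioi a)) (a : ℝ≥0∞) :
    ν (Ici a) ≤ ν' (Ici a) := by
  rcases eq_zero_or_pos a with rfl | ha
  · simp
  obtain ⟨u, hu_mono, hu_mem, hu_lim⟩ := exists_seq_strictMono_tendsto' ha
  have hIci : Ici a = ⋂ n, Ioi (u n) := by
    ext x
    simp only [mem_Ici, mem_iInter, mem_Ioi]
    exact ⟨fun hx n => (hu_mem n).2.trans_le hx,
      fun hx => le_of_tendsto' hu_lim fun n => (hx n).le⟩
  have hanti : Antitone fun n => Ioi (u n) := fun m n hmn => Ioi_subset_Ioi (hu_mono.monotone hmn)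
  calc ν (Ici a) ≤ ⨅ n, ν' (Ioi (u n)) :=
        le_iInf fun n => (measure_mono (hIci ▸ iInter_subset _ n)).trans (h (u n))
    _ = ν' (Ici a) := by
        rw [hIci, hanti.measure_iInter (fun n => measurableSet_Ioi.nullMeasurableSet)
          ⟨0, measure_ne_top _ _⟩]

lemma stochasticallyLE_of_measure_Ioi_le {ν ν' : Measure ℝ≥0∞} [IsProbabilityMeasure ν]
    [IsProbabilityMeasure ν'] (h : ∀ a, ν (Ioi a) ≤ ν' (Ioi a)) : StochasticallyLE ν ν' := by
  intro U hU _
  rcases hU.eq_Ioi_or_eq_Ici_sInf with hU | hU <;> rw [hU]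
  · exact h _
  · exact measure_Ici_le_of_measure_Ioi_le h _

section Products

variable {α β : Type*} [MeasurableSpace α] [MeasurableSpace β] [Preorder α] [Preorder β]

lemma StochasticallyLE.prod {ν ν' : Measure α} {ρ ρ' : Measure β} [SigmaFinite ν]
    [SigmaFinite ν'] [SigmaFinite ρ] [SigmaFinite ρ'] (hν : StochasticallyLE ν ν')
    (hρ : StochasticallyLE ρ ρ') : StochasticallyLE (ν.prod ρ) (ν'.prod ρ') := by
  intro S hS hSm
  calc (ν.prod ρ) S = ∫⁻ x, ρ (Prod.mk x ⁻¹' S) ∂ν := Measure.prod_apply hSm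
    _ ≤ ∫⁻ x, ρ' (Prod.mk x ⁻¹' S) ∂ν := lintegral_mono fun x =>
        hρ _ (hS.preimage fun _ _ h => ⟨le_rfl, h⟩) (measurable_prodMk_left hSm)
    _ = ∫⁻ y, ν ((·, y) ⁻¹' S) ∂ρ' := by
        rw [← Measure.prod_apply hSm, Measure.prod_apply_symm hSm]
    _ ≤ ∫⁻ y, ν' ((·, y) ⁻¹' S) ∂ρ' := lintegral_mono fun y =>
        hν _ (hS.preimage fun _ _ h => ⟨h, le_rfl⟩) (measurable_prodMk_right hSm)
    _ = (ν'.prod ρ') S := (Measure.prod_apply_symm hSm).symm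

lemma StochasticallyLE.pi {k : ℕ} {α : Fin k → Type*} [∀ i, MeasurableSpace (α i)]
    [∀ i, Preorder (α i)] {ν ν' : ∀ i, Measure (α i)} [∀ i, SigmaFinite (ν i)]
    [∀ i, SigmaFinite (ν' i)] (h : ∀ i, StochasticallyLE (ν i) (ν' i)) :
    StochasticallyLE (Measure.pi ν) (Measure.pi ν') := by
  induction k with
  | zero => rw [Measure.pi_of_empty, Measure.pi_of_empty]; exact fun _ _ _ => le_rfl
  | succ k ih =>
    intro E hE hEm
    have hprod := (h 0).prod (ih fun j => h (Fin.succ j))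
    have hup : IsUpperSet ((MeasurableEquiv.piFinSuccAbove α 0).symm ⁻¹' E) :=
      hE.preimage (Fin.insertNthOrderIso α 0).monotone
    have hm := (MeasurableEquiv.piFinSuccAbove α 0).symm.measurable hEm
    rw [← ((measurePreserving_piFinSuccAbove ν 0).symm _).measure_preimage hEm.nullMeasurableSet,
      ← ((measurePreserving_piFinSuccAbove ν' 0).symm _).measure_preimage hEm.nullMeasurableSet]
    exact hprod _ hup hm

end Products

def cusumAlarm (A : ℝ≥0∞) (k : ℕ) : Set (Fin k → ℝ≥0∞) :=
  {v | ∃ j m : Fin k, j ≤ m ∧ A ≤ ∏ i ∈ Finset.Icc j m, v i}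

lemma isUpperSet_cusumAlarm (A : ℝ≥0∞) (k : ℕ) : IsUpperSet (cusumAlarm A k) := by
  rintro v w hvw ⟨j, m, hjm, hA⟩
  exact ⟨j, m, hjm, hA.trans (Finset.prod_le_prod' fun i _ => hvw i)⟩

lemma measurableSet_cusumAlarm (A : ℝ≥0∞) (k : ℕ) : MeasurableSet (cusumAlarm A k) := by
  simp only [cusumAlarm, ofPred_exists, ofPred_and]
  exact .iUnion fun j => .iUnion fun m => (MeasurableSet.const _).inter
    (measurableSet_le measurable_const (Finset.measurable_prod _ fun i _ => measurable_pi_apply i))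

lemma _root_.Fin.prod_Icc_val_add_one {M : Type*} [CommMonoid M] {k : ℕ} (f : ℕ → M)
    (j m : Fin k) :
    ∏ i ∈ Finset.Icc j m, f (i + 1) = ∏ i ∈ Finset.Icc ((j : ℕ) + 1) (m + 1), f i := by
  rw [← Finset.map_add_right_Icc, ← Fin.map_valEmbedding_Icc, Finset.prod_map, Finset.prod_map]
  rfl

lemma succ_le_cusumTimeE_iff {α : Type*} (p₀ p₁ : α → ℝ≥0∞) (A : ℝ≥0∞) (k : ℕ) (ω : ℕ → α) :
    ((k + 1 : ℕ) : ℕ∞) ≤ cusumTimeE p₀ p₁ A ω ↔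
      (fun i : Fin k => p₁ (ω (i + 1)) / p₀ (ω (i + 1))) ∉ cusumAlarm A k := by
  rw [cusumTimeE, le_sInf_iff]
  constructor
  · rintro h ⟨j, m, hjm, hA⟩
    have hle := h (((m : ℕ) + 1 : ℕ) : ℕ∞) ⟨(m : ℕ) + 1, by omega, rfl, (j : ℕ) + 1, by omega,
      Nat.add_le_add_right (Fin.le_def.1 hjm) 1,
      by rwa [← Fin.prod_Icc_val_add_one (fun n => p₁ (ω n) / p₀ (ω n))]⟩
    have := m.isLt
    have := Nat.cast_le.1 hle
    omega
  · rintro h _ ⟨m, hm, rfl, j, hj, hjm, hA⟩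
    by_contra! hlt
    have hmk : m - 1 < k := by have := Nat.cast_lt.1 hlt; omega
    refine h ⟨⟨j - 1, by omega⟩, ⟨m - 1, hmk⟩, Fin.mk_le_mk.2 (by omega), ?_⟩
    rw [Fin.prod_Icc_val_add_one (fun n => p₁ (ω n) / p₀ (ω n))]
    convert hA using 3 <;> simp <;> omega

lemma IsNoChangeLaw.isProbabilityMeasure {Q : Measure (ℕ → 𝒳)} {ν : Measure 𝒳}
    (h : IsNoChangeLaw Q ν) : IsProbabilityMeasure ν := by
  have := h.1
  have h1 := h.2 {1} (by simp) (fun _ => univ) (fun _ => .univ)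
  simp only [Finset.mem_singleton, forall_eq, mem_univ, ofPred_true, measure_univ,
    Finset.prod_singleton] at h1
  exact ⟨h1.symm⟩

lemma IsNoChangeLaw.map_succ {Q : Measure (ℕ → 𝒳)} {ν : Measure 𝒳} (h : IsNoChangeLaw Q ν)
    (k : ℕ) : Q.map (fun ω (i : Fin k) => ω (i + 1)) = Measure.pi fun _ => ν := by
  have := h.isProbabilityMeasure
  refine (Measure.pi_eq fun s hs => ?_).symm
  let e : Fin k ↪ ℕ := Fin.valEmbedding.trans (addRightEmbedding 1)
  let B : ℕ → Set 𝒳 := fun n => if hn : n - 1 < k then s ⟨n - 1, hn⟩ else univ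
  have hB : ∀ i : Fin k, B (i + 1) = s i := fun i => by simp [B]
  have hBm : ∀ n, MeasurableSet (B n) := fun n => by
    unfold B; split_ifs
    exacts [hs _, .univ]
  have hrect := h.2 (Finset.univ.map e) (by simp [e]) B hBm
  simp only [Finset.forall_mem_map, Finset.prod_map, Finset.mem_univ, forall_const] at hrect
  rw [Measure.map_apply (by fun_prop) (.univ_pi hs)]
  simpa [e, hB, Set.preimage, Set.pi] using hrect

lemma IsNoChangeLaw.map_comp_succ {β : Type*} [MeasurableSpace β] {Q : Measure (ℕ → 𝒳)}
    {ν : Measure 𝒳} (h : IsNoChangeLaw Q ν) {f : 𝒳 → β} (hf : Measurable f) (k : ℕ) :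
    Q.map (fun ω (i : Fin k) => f (ω (i + 1))) = Measure.pi fun _ => ν.map f := by
  have := h.isProbabilityMeasure
  have := Measure.isProbabilityMeasure_map (μ := ν) hf.aemeasurable
  rw [← Measure.pi_map_pi fun _ => hf.aemeasurable, ← h.map_succ k,
    Measure.map_map (by fun_prop) (by fun_prop)]
  rfl

lemma IsNoChangeLaw.measure_le_cusumTimeE_le_of_tail_le {Q Q' : Measure (ℕ → 𝒳)}
    {ν ν' : Measure 𝒳} (hQ : IsNoChangeLaw Q ν) (hQ' : IsNoChangeLaw Q' ν')
    {p₀ p₁ : 𝒳 → ℝ≥0∞} (hℓ : Measurable fun x => p₁ x / p₀ x)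
    (htail : ∀ η, ν {x | η < p₁ x / p₀ x} ≤ ν' {x | η < p₁ x / p₀ x}) (A : ℝ≥0∞) (t : ℕ) :
    Q' {ω | (t : ℕ∞) ≤ cusumTimeE p₀ p₁ A ω} ≤ Q {ω | (t : ℕ∞) ≤ cusumTimeE p₀ p₁ A ω} := by
  have := hQ.1
  have := hQ'.1
  have := hQ.isProbabilityMeasure
  have := hQ'.isProbabilityMeasure
  have := Measure.isProbabilityMeasure_map (μ := ν) hℓ.aemeasurable
  have := Measure.isProbabilityMeasure_map (μ := ν') hℓ.aemeasurable
  have hdom : StochasticallyLE (ν.map fun x => p₁ x / p₀ x) (ν'.map fun x => p₁ x / p₀ x) :=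
    stochasticallyLE_of_measure_Ioi_le fun η => by
      rw [Measure.map_apply hℓ measurableSet_Ioi, Measure.map_apply hℓ measurableSet_Ioi]
      exact htail η
  rcases t with _ | k
  · simp
  set lr : (ℕ → 𝒳) → Fin k → ℝ≥0∞ := fun ω i => p₁ (ω (i + 1)) / p₀ (ω (i + 1))
  have hlr : Measurable lr := measurable_pi_lambda _ fun i => hℓ.comp (measurable_pi_apply _)
  have hE := measurableSet_cusumAlarm A k
  have hAlarm : Q (lr ⁻¹' cusumAlarm A k) ≤ Q' (lr ⁻¹' cusumAlarm A k) := by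
    rw [← Measure.map_apply hlr hE, ← Measure.map_apply hlr hE,
      hQ.map_comp_succ hℓ, hQ'.map_comp_succ hℓ]
    exact StochasticallyLE.pi (fun _ => hdom) _ (isUpperSet_cusumAlarm A k) hE
  simp only [succ_le_cusumTimeE_iff]
  change Q' (lr ⁻¹' cusumAlarm A k)ᶜ ≤ Q (lr ⁻¹' cusumAlarm A k)ᶜ
  rw [prob_compl_eq_one_sub (hlr hE), prob_compl_eq_one_sub (hlr hE)]
  exact tsub_le_tsub_left hAlarm 1

theorem lfd_pair_implies_assumption_one_general
    {𝒳 : Type*} [MeasurableSpace 𝒳]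
    (𝒫₀ 𝒫₁ : Set (Measure 𝒳))
    (p₀ p₁ : 𝒳 → ℝ≥0∞) (hp₀ : Measurable p₀) (hp₁ : Measurable p₁)
    (P₀s P₁s : Measure 𝒳)
    -- the constants appearing in the risks
    (C₀ C₁ : ℝ≥0∞) (hC₀ : 0 < C₀) (hC₀' : C₀ ≠ ⊤)
    -- least favorable distribution pair: for every likelihood ratio test (threshold η),
    -- the risk at (P₀*, P₁*) dominates the risk at every (P₀, P₁) ∈ 𝒫₀ × 𝒫₁
    (hLFD : ∀ η : ℝ≥0∞,
      (∀ P₀ ∈ 𝒫₀, C₀ * P₀ {x | η < p₁ x / p₀ x} ≤ C₀ * P₀s {x | η < p₁ x / p₀ x}) ∧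
      (∀ P₁ ∈ 𝒫₁, C₁ * P₁ {x | p₁ x / p₀ x ≤ η} ≤ C₁ * P₁s {x | p₁ x / p₀ x ≤ η}))
    (A : ℝ≥0∞) :
    ∀ P₀ ∈ 𝒫₀, ∀ t : ℕ, ∀ Q Qs : Measure (ℕ → 𝒳),
      IsNoChangeLaw Q P₀ → IsNoChangeLaw Qs P₀s →
      Qs {ω | (t : ℕ∞) ≤ cusumTimeE p₀ p₁ A ω} ≤
        Q {ω | (t : ℕ∞) ≤ cusumTimeE p₀ p₁ A ω} := by
  intro P₀ hP₀ t Q Qs hQ hQs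
  refine hQ.measure_le_cusumTimeE_le_of_tail_le hQs (hp₁.div hp₀) (fun η => ?_) A t
  exact (ENNReal.mul_le_mul_iff_right hC₀.ne' hC₀').1 ((hLFD η).1 P₀ hP₀)

/-- If `(P₀*, P₁*)` is a least favorable distribution pair in terms of
risk for testing `𝒫₀` vs `𝒫₁` (for every likelihood ratio test between `P₀*` and `P₁*`,
the risks `R(P_j*, φ) = C_j·P_j*(error)` dominate `R(P_j, φ)` for all `P_j ∈ 𝒫_j`), then
Assumption 1 holds with `F₀* = P₀*` for the CUSUM detector built from the likelihood ratio
of `P₁*` to `P₀*`: `P_{P₀,∞}(τ_cs ≥ t) ≥ P_{P₀*,∞}(τ_cs ≥ t)` for every `P₀ ∈ 𝒫₀` and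
`t ∈ ℕ`, hence `inf_{P₀ ∈ 𝒫₀} P_{P₀,∞}(τ_cs ≥ t) ≥ P_{P₀*,∞}(τ_cs ≥ t)`. -/
theorem lfd_pair_implies_assumption_one
    {𝒳 : Type*} [MeasurableSpace 𝒳]
    (𝒫₀ 𝒫₁ : Set (Measure 𝒳)) (hdisj : Disjoint 𝒫₀ 𝒫₁)
    (μ : Measure 𝒳) [SigmaFinite μ]
    (p₀ p₁ : 𝒳 → ℝ≥0∞) (hp₀ : Measurable p₀) (hp₁ : Measurable p₁)
    (P₀s P₁s : Measure 𝒳) (hP₀s : P₀s ∈ 𝒫₀) (hP₁s : P₁s ∈ 𝒫₁)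
    (hd₀ : P₀s = μ.withDensity p₀) (hd₁ : P₁s = μ.withDensity p₁)
    -- the constants appearing in the risks
    (C₀ C₁ : ℝ≥0∞) (hC₀ : 0 < C₀) (hC₀' : C₀ ≠ ⊤) (hC₁ : 0 < C₁) (hC₁' : C₁ ≠ ⊤)
    -- least favorable distribution pair: for every likelihood ratio test (threshold η),
    -- the risk at (P₀*, P₁*) dominates the risk at every (P₀, P₁) ∈ 𝒫₀ × 𝒫₁
    (hLFD : ∀ η : ℝ≥0∞,
      (∀ P₀ ∈ 𝒫₀, C₀ * P₀ {x | η < p₁ x / p₀ x} ≤ C₀ * P₀s {x | η < p₁ x / p₀ x}) ∧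
      (∀ P₁ ∈ 𝒫₁, C₁ * P₁ {x | p₁ x / p₀ x ≤ η} ≤ C₁ * P₁s {x | p₁ x / p₀ x ≤ η}))
    (A : ℝ≥0∞) (hA : 0 < A) :
    ∀ P₀ ∈ 𝒫₀, ∀ t : ℕ, ∀ Q Qs : Measure (ℕ → 𝒳),
      IsNoChangeLaw Q P₀ → IsNoChangeLaw Qs P₀s →
      Qs {ω | (t : ℕ∞) ≤ cusumTimeE p₀ p₁ A ω} ≤
        Q {ω | (t : ℕ∞) ≤ cusumTimeE p₀ p₁ A ω} :=
  lfd_pair_implies_assumption_one_general 𝒫₀ 𝒫₁ p₀ p₁ hp₀ hp₁ P₀s P₁s C₀ C₁ hC₀ hC₀' hLFD A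

end SeqChange
end

section
/- Adaptive confidence set for known pre- and post-change distributions: for any fixed α ∈ (0,1), any B, N, T ∈ ℕ, any L ∈ ℕ ∪ {∞}, and any change detection stopping time τ with P_{F₀,∞}(τ ≥ T) > 0, the confidence set C₁ := {t ∈ ℕ : t ≤ τ, M_t ≤ Quantile(1 − α r_t; M_t, M_{t,L}¹,…,M_{t,L}^B)}, constructed with any family (r_t) of almost surely strictly positive random variables, each independent of the observed data and of the simulations, satisfying E[r_t] = P_{F₀,∞}(τ ≥ t), satisfies P_{F₀,T,F₁}(T ∈ C₁ | τ ≥ T) ≥ 1 − α. -/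
open MeasureTheory ProbabilityTheory Filter Set
open scoped ENNReal NNReal

namespace SeqChange

variable {𝒳 : Type*} [MeasurableSpace 𝒳]

/-- `Quantile(1 − c; v)`: the `⌈(1 − c)·|v|⌉`-th smallest of the values in `v`. -/
noncomputable def quantileStat (c : ℝ) (v : Multiset EReal) : EReal :=
  (v.sort (· ≤ ·)).getD (⌈(1 - c) * (v.card : ℝ)⌉₊ - 1) ⊥

/-- Membership in the stopped confidence sequence `CS(X_t, …, X_τ; 1 − c)`:
`θ ∈ CS(X_t,…,X_n; 1−c)` whenever `τ = n` (vacuously true when `τ = ∞`). -/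
def stoppedCSMem {𝒳 : Type*} [MeasurableSpace 𝒳] {Θ : Type*} (τ : (ℕ → 𝒳) → ℕ∞)
    (CSset : ℝ → ℕ → ℕ → (ℕ → 𝒳) → Set Θ) (c : ℝ) (t : ℕ) (ω : ℕ → 𝒳) (θ : Θ) : Prop :=
  ∀ n : ℕ, t ≤ n → τ ω = (n : ℕ∞) → θ ∈ CSset c t n ω

/-- The `(B+1)`-tuple `(M_t, M_{t,∞}¹, …, M_{t,∞}^B)` viewed as functions on the product
of the data space and the simulation space. -/
def simTuple {𝒳 Ωs : Type*} (B : ℕ) (M : (ℕ → 𝒳) → EReal) (Minf : Fin B → Ωs → EReal) :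
    Fin (B + 1) → ((ℕ → 𝒳) × Ωs) → EReal :=
  Fin.cases (fun q => M q.1) (fun j q => Minf j q.2)

/-!
Let `S = {τ ≥ T}`. It is determined by `X₁, …, X_{T-1}`, so it has the same probability `p`
under `P_{F₀,T,F₁}` and under `P_{F₀,∞}`. On `S`, if `r_T ≥ 0` and `T ∉ C₁`, then `M_T` lies
strictly above the `⌈(1 - α r_T)(B + 1)⌉`-th smallest of `M_T, M_{T,L}¹, …, M_{T,L}^B`, hence
(as `M_{T,∞}^j ≤ M_{T,L}^j`) strictly above at least `k = ⌈(1 - α r_T)(B + 1)⌉` of the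
`M_{T,∞}^j`. The tuple `(M_T, M_{T,∞}¹, …, M_{T,∞}^B)` is i.i.d., hence exchangeable, and at
most `B + 1 - k` of its entries can each exceed `k` others, so this has probability at most
`(B + 1 - k)/(B + 1) ≤ α r_T`. Integrating over the independent `r_T` bounds the probability of
`S ∩ {T ∉ C₁}` by `α E[r_T] = α p`, and dividing by `p` gives the claim.
-/

open Finset

section Rank

variable {ι α : Type*} [Fintype ι] [LinearOrder α]

def lowerCount (y : ι → α) (j : ι) : ℕ := #{i | y i < y j}

lemma lowerCount_comp_perm (y : ι → α) (σ : Equiv.Perm ι) (j : ι) :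
    lowerCount (y ∘ σ) j = lowerCount y (σ j) := by
  simp only [lowerCount, card_filter, Function.comp_apply]
  exact Equiv.sum_comp σ fun i => if y i < y (σ j) then 1 else 0

lemma card_le_lowerCount_le (y : ι → α) (k : ℕ) :
    #{j | k ≤ lowerCount y j} ≤ Fintype.card ι - k := by
  classical
  set S : Finset ι := {j | k ≤ lowerCount y j}
  rcases S.eq_empty_or_nonempty with hS | hS
  · simp [hS]
  obtain ⟨j₀, hj₀, hmin⟩ := S.exists_min_image y hS
  -- everything strictly below the smallest element of `S` lies outside `S`
  have hbelow : ({i | y i < y j₀} : Finset ι) ⊆ Sᶜ := fun i hi =>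
    mem_compl.2 fun hiS => (mem_filter.1 hi).2.not_ge (hmin i hiS)
  have hk : k ≤ Fintype.card ι - #S :=
    calc k ≤ lowerCount y j₀ := (mem_filter.1 hj₀).2
      _ ≤ #Sᶜ := card_le_card hbelow
      _ = Fintype.card ι - #S := card_compl S
  have := S.card_le_univ
  omega

end Rank

lemma _root_.List.Pairwise.succ_le_countP_lt_of_getElem_lt {α : Type*} [Preorder α]
    {l : List α} (hl : l.Pairwise (· ≤ ·)) {i : ℕ} (hi : i < l.length) {m : α}
    [DecidablePred (· < m)] (h : l[i] < m) : i + 1 ≤ l.countP (· < m) := by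
  have hprefix : ∀ a ∈ l.take (i + 1), a < m := by
    intro a ha
    obtain ⟨j, hj, rfl⟩ := List.getElem_of_mem ha
    rw [List.getElem_take]
    rw [List.length_take] at hj
    exact lt_of_le_of_lt (hl.rel_get_of_le (a := ⟨j, by omega⟩) (b := ⟨i, hi⟩)
      (Fin.mk_le_mk.2 (by omega))) h
  calc i + 1 = (l.take (i + 1)).countP (· < m) := by
        rw [List.countP_eq_length.2 (by simpa using hprefix), List.length_take]; omega
    _ ≤ l.countP (· < m) := (List.take_sublist _ _).countP_le

lemma ceil_le_countP_of_quantileStat_lt {c : ℝ} (hc : 0 ≤ c) {v : Multiset EReal} {m : EReal}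
    (h : quantileStat c v < m) : ⌈(1 - c) * (v.card : ℝ)⌉₊ ≤ v.countP (· < m) := by
  set K := ⌈(1 - c) * (v.card : ℝ)⌉₊
  have hK : K ≤ v.card := Nat.ceil_le.2 (by nlinarith [(Nat.cast_nonneg v.card : (0 : ℝ) ≤ _)])
  rcases Nat.eq_zero_or_pos K with hK0 | hKpos
  · simp [hK0]
  have hidx : K - 1 < (v.sort (· ≤ ·)).length := by rw [Multiset.length_sort]; omega
  rw [quantileStat, List.getD_eq_getElem _ _ hidx] at h
  have := (Multiset.pairwise_sort v (· ≤ ·)).succ_le_countP_lt_of_getElem_lt hidx h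
  rw [← Multiset.sort_eq v (· ≤ ·), Multiset.coe_countP]
  omega

lemma ceil_le_card_lt_of_quantileStat_cons_lt {ι : Type*} {c : ℝ} (hc : 0 ≤ c) (s : Finset ι)
    (z : ι → EReal) {m : EReal} (h : quantileStat c (m ::ₘ s.val.map z) < m) :
    ⌈(1 - c) * ((#s + 1 : ℕ) : ℝ)⌉₊ ≤ #{j ∈ s | z j < m} := by
  simpa only [Multiset.card_cons, Multiset.card_map, Finset.card_val, Multiset.countP_cons,
    if_neg (lt_irrefl m), add_zero, Multiset.countP_map, ← Finset.filter_val]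
    using ceil_le_countP_of_quantileStat_lt hc h

lemma natCast_sub_ceil_div_le (n : ℕ) (c : ℝ) :
    ((n - ⌈(1 - c) * n⌉₊ : ℕ) : ℝ≥0∞) / n ≤ ENNReal.ofReal c := by
  rcases le_or_gt n ⌈(1 - c) * n⌉₊ with hle | hlt
  · simp [Nat.sub_eq_zero_of_le hle]
  have hn : (n : ℝ≥0∞) ≠ 0 := by simp; omega
  have hceil := Nat.le_ceil ((1 - c) * n)
  have hreal : ((n - ⌈(1 - c) * n⌉₊ : ℕ) : ℝ) ≤ c * n := by
    rw [Nat.cast_sub hlt.le]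
    linarith
  rw [ENNReal.div_le_iff hn (ENNReal.natCast_ne_top n), ← ENNReal.ofReal_natCast,
    ← ENNReal.ofReal_natCast n, ← ENNReal.ofReal_mul' (Nat.cast_nonneg n)]
  exact ENNReal.ofReal_le_ofReal hreal

lemma prod_apply_le_ofReal_integral {β γ : Type*} [MeasurableSpace β] [MeasurableSpace γ]
    {ν : Measure β} [SFinite ν] {μ : Measure γ} [SFinite μ] {D : Set (β × γ)}
    (hD : MeasurableSet D) {f : γ → ℝ} (hf : Integrable f μ) (hf0 : 0 ≤ᵐ[μ] f)
    (hslice : ∀ a, ν ((fun b => (b, a)) ⁻¹' D) ≤ ENNReal.ofReal (f a)) :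
    ν.prod μ D ≤ ENNReal.ofReal (∫ a, f a ∂μ) := by
  rw [Measure.prod_apply_symm hD, ofReal_integral_eq_lintegral_ofReal hf hf0]
  exact lintegral_mono hslice

section Exchangeable

variable {α : Type*} [TopologicalSpace α] [LinearOrder α] [OrderClosedTopology α]
  [SecondCountableTopology α] [MeasurableSpace α] [OpensMeasurableSpace α]

lemma measurable_card_filter_lt {ι Ω : Type*} [Fintype ι] [MeasurableSpace Ω]
    {Z : ι → Ω → α} {Y : Ω → α} (hZ : ∀ j, Measurable (Z j)) (hY : Measurable Y) :
    Measurable fun ω => #{j | Z j ω < Y ω} := by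
  simp only [card_filter]
  exact Finset.measurable_sum _ fun j _ =>
    Measurable.ite (measurableSet_lt (hZ j) hY) measurable_const measurable_const

lemma pi_le_lowerCount_le {ι : Type*} [Fintype ι] (m : Measure α) [IsProbabilityMeasure m]
    (j : ι) (k : ℕ) :
    Measure.pi (fun _ : ι => m) {y | k ≤ lowerCount y j}
      ≤ ((Fintype.card ι - k : ℕ) : ℝ≥0∞) / Fintype.card ι := by
  classical
  set π := Measure.pi fun _ : ι => m
  set A : ι → Set (ι → α) := fun j => {y | k ≤ lowerCount y j}
  have hA : ∀ j, MeasurableSet (A j) := fun j =>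
    measurable_card_filter_lt measurable_pi_apply (measurable_pi_apply j) measurableSet_Ici
  have hexch : ∀ j', π (A j') = π (A j) := by
    intro j'
    set σ := Equiv.swap j j'
    have hσ : MeasurePreserving (fun y : ι → α => y ∘ σ) π π :=
      measurePreserving_arrowCongr' (fun _ => m) (fun _ => m) σ.symm (MeasurableEquiv.refl α)
        fun _ => MeasurePreserving.id m
    have hpre : (fun y : ι → α => y ∘ σ) ⁻¹' A j = A j' := by
      ext y
      simp [A, lowerCount_comp_perm, σ]
    rw [← hpre, hσ.measure_preimage (hA j).nullMeasurableSet]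
  have hsum : ∑ j', π (A j') ≤ (Fintype.card ι - k : ℕ) :=
    calc ∑ j', π (A j') = ∫⁻ y, ∑ j', (A j').indicator 1 y ∂π := by
          rw [lintegral_finsetSum _ fun j' _ => measurable_one.indicator (hA j')]
          simp [lintegral_indicator_one (hA _)]
      _ ≤ ∫⁻ _, ((Fintype.card ι - k : ℕ) : ℝ≥0∞) ∂π := by
          refine lintegral_mono fun y => ?_
          simp only [Set.indicator_apply, Pi.one_apply]
          rw [sum_boole]
          exact Nat.cast_le.2 (card_le_lowerCount_le y k)
      _ = (Fintype.card ι - k : ℕ) := by simp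
  rw [sum_congr rfl fun j' _ => hexch j', sum_const, card_univ, nsmul_eq_mul] at hsum
  have : Nonempty ι := ⟨j⟩
  rw [ENNReal.le_div_iff_mul_le (Or.inl (Nat.cast_ne_zero.2 Fintype.card_ne_zero))
    (Or.inl (ENNReal.natCast_ne_top _)), mul_comm]
  exact hsum

variable {Ω : Type*} [MeasurableSpace Ω] {ν : Measure Ω} [IsProbabilityMeasure ν]

lemma measure_le_lowerCount_le {ι : Type*} [Fintype ι] {Y : ι → Ω → α} (hind : iIndepFun Y ν)
    {j : ι} (hid : ∀ i, IdentDistrib (Y i) (Y j) ν ν) (k : ℕ) :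
    ν {ω | k ≤ lowerCount (fun i => Y i ω) j}
      ≤ ((Fintype.card ι - k : ℕ) : ℝ≥0∞) / Fintype.card ι := by
  have hY : ∀ i, AEMeasurable (Y i) ν := fun i => (hid i).aemeasurable_fst
  have : IsProbabilityMeasure (ν.map (Y j)) := Measure.isProbabilityMeasure_map (hY j)
  have hlaw : ν.map (fun ω i => Y i ω) = Measure.pi fun _ => ν.map (Y j) := by
    rw [hind.map_fun_eq_pi_map hY]
    simp_rw [(hid _).map_eq]
  have hA : MeasurableSet {y : ι → α | k ≤ lowerCount y j} :=
    measurable_card_filter_lt measurable_pi_apply (measurable_pi_apply j) measurableSet_Ici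
  rw [← Set.preimage_ofPred_eq (p := fun y => k ≤ lowerCount y j),
    ← Measure.map_apply_of_aemeasurable (aemeasurable_pi_lambda _ hY) hA, hlaw]
  exact pi_le_lowerCount_le _ j k

lemma measure_ceil_le_card_lt_le {n : ℕ} {Y : Fin (n + 1) → Ω → α} (hind : iIndepFun Y ν)
    (hid : ∀ i, IdentDistrib (Y i) (Y 0) ν ν) {Z : Fin n → Ω → α}
    (hZ : ∀ j ω, Y j.succ ω ≤ Z j ω) (c : ℝ) :
    ν {ω | ⌈(1 - c) * ((n + 1 : ℕ) : ℝ)⌉₊ ≤ #{j | Z j ω < Y 0 ω}} ≤ ENNReal.ofReal c := by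
  have hcount : ∀ ω, #{j | Z j ω < Y 0 ω} ≤ lowerCount (fun i => Y i ω) 0 := fun ω => by
    rw [lowerCount, Fin.card_filter_univ_succ, if_neg (lt_irrefl _)]
    exact card_le_card (monotone_filter_right _ fun j _ => (hZ j ω).trans_lt)
  calc _ ≤ ν {ω | ⌈(1 - c) * ((n + 1 : ℕ) : ℝ)⌉₊ ≤ lowerCount (fun i => Y i ω) 0} :=
        measure_mono fun ω hω => le_trans hω (hcount ω)
    _ ≤ _ := measure_le_lowerCount_le hind hid _
    _ ≤ _ := by simpa using natCast_sub_ceil_div_le (n + 1) c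

lemma prod_ceil_le_card_lt_le_ofReal_integral {Ωr : Type*} [MeasurableSpace Ωr]
    {μr : Measure Ωr} [IsProbabilityMeasure μr] {n : ℕ} {Y : Fin (n + 1) → Ω → α}
    (hind : iIndepFun Y ν) (hid : ∀ i, IdentDistrib (Y i) (Y 0) ν ν) {Z : Fin n → Ω → α}
    (hZ : ∀ j ω, Y j.succ ω ≤ Z j ω) (hZmeas : ∀ j, Measurable (Z j)) (hY0 : Measurable (Y 0))
    {r : Ωr → ℝ} (hrmeas : Measurable r) (hrint : Integrable r μr) (hr0 : 0 ≤ᵐ[μr] r)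
    {a : ℝ} (ha : 0 ≤ a) :
    ν.prod μr {z | ⌈(1 - a * r z.2) * ((n + 1 : ℕ) : ℝ)⌉₊ ≤ #{j | Z j z.1 < Y 0 z.1}}
      ≤ ENNReal.ofReal (a * ∫ x, r x ∂μr) := by
  rw [← integral_const_mul]
  refine prod_apply_le_ofReal_integral ?_ (hrint.const_mul a)
    (hr0.mono fun _ hx => mul_nonneg ha hx) fun x => measure_ceil_le_card_lt_le hind hid hZ _
  exact measurableSet_le (Nat.measurable_ceil.comp (by fun_prop))
    (measurable_card_filter_lt (fun j => (hZmeas j).comp measurable_fst) (hY0.comp measurable_fst))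

end Exchangeable

lemma ofReal_one_sub_le_cond {Ω : Type*} [MeasurableSpace Ω] {μ : Measure Ω} [IsFiniteMeasure μ]
    {S G : Set Ω} (hS : MeasurableSet S) (hS0 : μ S ≠ 0) {a : ℝ} (ha : 0 ≤ a)
    (hbad : μ (S \ G) ≤ ENNReal.ofReal a * μ S) :
    ENNReal.ofReal (1 - a) ≤ μ[G | S] := by
  rw [cond_apply hS, ← ENNReal.div_eq_inv_mul,
    ENNReal.le_div_iff_mul_le (Or.inl hS0) (Or.inl (measure_ne_top μ S)),
    ENNReal.ofReal_sub _ ha, ENNReal.ofReal_one, ENNReal.sub_mul fun _ _ => measure_ne_top μ S,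
    one_mul, tsub_le_iff_right]
  exact (measure_le_inter_add_sdiff μ S G).trans (add_le_add_right hbad _)

lemma natFilt_le (n : ℕ) : natFilt 𝒳 n ≤ MeasurableSpace.pi :=
  iSup₂_le fun i _ => (measurable_pi_apply i).comap_le

lemma IsStoppingTimeSeq.measurableSet_natFilt_le {τ : (ℕ → 𝒳) → ℕ∞} (hτ : IsStoppingTimeSeq τ)
    {T : ℕ} (hT : 1 ≤ T) : MeasurableSet[natFilt 𝒳 (T - 1)] {ω | (T : ℕ∞) ≤ τ ω} := by
  have : {ω | (T : ℕ∞) ≤ τ ω} = {ω | τ ω ≤ ((T - 1 : ℕ) : ℕ∞)}ᶜ := by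
    ext ω
    rw [Set.mem_compl_iff, Set.mem_ofPred_eq, Set.mem_ofPred_eq, not_le,
      ← ENat.add_one_le_iff (ENat.natCast_ne_top _)]
    norm_cast
    rw [Nat.sub_add_cancel hT]
  rw [this]
  exact (hτ (T - 1)).compl

theorem adaptive_known_coverage_general
    {𝒳 : Type*} [MeasurableSpace 𝒳]
    (τ : (ℕ → 𝒳) → ℕ∞) (hτ : IsStoppingTimeSeq τ)
    -- `P t` is the joint law `P_{F₀,t,F₁}` (change at time `t`; dependence is allowed),
    -- `Pinf` is the joint law `P_{F₀,∞}` with no change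
    (P : ℕ → Measure (ℕ → 𝒳)) (Pinf : Measure (ℕ → 𝒳))
    (hPprob : ∀ t, IsProbabilityMeasure (P t)) (hPinfprob : IsProbabilityMeasure Pinf)
    -- the pre-change segment `X₁, …, X_{t-1}` has the same joint law under `P t` and `Pinf`
    (hagree : ∀ t : ℕ, 1 ≤ t → ∀ s : Set (ℕ → 𝒳),
      MeasurableSet[natFilt 𝒳 (t - 1)] s → P t s = Pinf s)
    -- the observed statistic, with the convention `M_t = -∞` when `t > τ` or `τ = ∞`
    (M : ℕ → (ℕ → 𝒳) → EReal) (hMmeas : ∀ t, Measurable (M t))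
    (B : ℕ)
    -- the simulation space, carrying the B simulated (truncated and untruncated) statistics
    {Ωs : Type*} [MeasurableSpace Ωs] (μs : Measure Ωs) [IsProbabilityMeasure μs]
    (ML Minf : ℕ → Fin B → Ωs → EReal)
    (hMLmeas : ∀ t j, Measurable (ML t j))
    (hLB : ∀ t j w, Minf t j w ≤ ML t j w)
    -- for each fixed t, under `P_{F₀,t,F₁}` the tuple `(M_t, M_{t,∞}¹, …, M_{t,∞}^B)`
    -- is i.i.d. (it is independent of `r_t` by the product construction)
    (hiid : ∀ t : ℕ, 1 ≤ t →
      iIndepFun (simTuple B (M t) (Minf t)) ((P t).prod μs) ∧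
      ∀ i : Fin (B + 1),
        IdentDistrib (simTuple B (M t) (Minf t) i) (simTuple B (M t) (Minf t) 0)
          ((P t).prod μs) ((P t).prod μs))
    -- the auxiliary randomization carrying the estimators `r_t`
    {Ωr : Type*} [MeasurableSpace Ωr] (μr : Measure Ωr) [IsProbabilityMeasure μr]
    (r : ℕ → Ωr → ℝ) (hrmeas : ∀ t, Measurable (r t))
    (hrpos : ∀ t, ∀ᵐ a ∂μr, 0 < r t a) (hrint : ∀ t, Integrable (r t) μr)
    (hrunb : ∀ t : ℕ, ∫ a, r t a ∂μr = (Pinf {ω | (t : ℕ∞) ≤ τ ω}).toReal)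
    (α : ℝ) (hα : α ∈ Set.Ioo (0 : ℝ) 1)
    (T : ℕ) (hT : 1 ≤ T)
    (hpos : Pinf {ω | (T : ℕ∞) ≤ τ ω} ≠ 0) :
    ENNReal.ofReal (1 - α) ≤
      ProbabilityTheory.cond ((P T).prod (μs.prod μr))
        {q : (ℕ → 𝒳) × (Ωs × Ωr) | (T : ℕ∞) ≤ τ q.1}
        {q : (ℕ → 𝒳) × (Ωs × Ωr) |
          T ∈ {t : ℕ | 1 ≤ t ∧ (t : ℕ∞) ≤ τ q.1 ∧
            M t q.1 ≤ quantileStat (α * r t q.2.2)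
              ((M t q.1) ::ₘ
                Multiset.map (fun j => ML t j q.2.1) (Finset.univ : Finset (Fin B)).val)}} := by
  set p := Pinf {ω | (T : ℕ∞) ≤ τ ω}
  have hSx := hτ.measurableSet_natFilt_le hT
  have hS : (P T).prod (μs.prod μr) (Prod.fst ⁻¹' {ω | (T : ℕ∞) ≤ τ ω}) = p := by
    rw [← Set.prod_univ, Measure.prod_prod, measure_univ, mul_one]
    exact hagree T hT _ hSx
  have hr0 : ∀ᵐ q ∂(P T).prod (μs.prod μr), 0 ≤ r T q.2.2 :=
    (Measure.quasiMeasurePreserving_snd.comp Measure.quasiMeasurePreserving_snd).ae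
      ((hrpos T).mono fun _ ha => ha.le)
  obtain ⟨hind, hid⟩ := hiid T hT
  refine ofReal_one_sub_le_cond (measurable_fst (natFilt_le _ _ hSx)) (hS ▸ hpos) hα.1.le ?_
  rw [hS]
  calc _ ≤ (P T).prod (μs.prod μr) {q | ⌈(1 - α * r T q.2.2) * ((B + 1 : ℕ) : ℝ)⌉₊ ≤
        #{j | ML T j q.2.1 < M T q.1}} := by
        refine measure_mono_ae (hr0.mono fun q hr ⟨hτq, hq⟩ => ?_)
        have := ceil_le_card_lt_of_quantileStat_cons_lt (mul_nonneg hα.1.le hr) Finset.univ _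
          (not_le.1 fun h => hq ⟨hT, hτq, h⟩)
        rwa [Finset.card_univ, Fintype.card_fin] at this
    _ = ((P T).prod μs).prod μr {z | ⌈(1 - α * r T z.2) * ((B + 1 : ℕ) : ℝ)⌉₊ ≤
        #{j | ML T j z.1.2 < M T z.1.1}} :=
        ((measurePreserving_prodAssoc _ _ _).measure_preimage_equiv _).symm
    _ ≤ ENNReal.ofReal (α * p.toReal) := by
        rw [← hrunb T]
        exact prod_ceil_le_card_lt_le_ofReal_integral hind hid (Z := fun j ξ => ML T j ξ.2)
          (fun j ξ => hLB T j ξ.2)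
          (fun j => (hMLmeas T j).comp measurable_snd) ((hMmeas T).comp measurable_fst)
          (hrmeas T) (hrint T) ((hrpos T).mono fun _ ha => ha.le) hα.1.le
    _ = ENNReal.ofReal α * p := by
        rw [ENNReal.ofReal_mul hα.1.le, ENNReal.ofReal_toReal (measure_ne_top _ _)]

/-- Adaptive confidence set for known pre- and post-change distributions
(possibly with dependent data): with
`C₁ := {t ≤ τ : M_t ≤ Quantile(1 − α r_t; M_t, M_{t,L}¹, …, M_{t,L}^B)}`,
for any `α ∈ (0,1)`, any `B, T`, any truncation level `L` (encoded through the
hypothesis `M_{t,∞}^j ≤ M_{t,L}^j`), and any detection stopping time `τ` with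
`P_{F₀,∞}(τ ≥ T) > 0`, one has `P_{F₀,T,F₁}(T ∈ C₁ | τ ≥ T) ≥ 1 − α`. -/
theorem adaptive_known_coverage
    {𝒳 : Type*} [MeasurableSpace 𝒳]
    (τ : (ℕ → 𝒳) → ℕ∞) (hτ : IsStoppingTimeSeq τ)
    -- `P t` is the joint law `P_{F₀,t,F₁}` (change at time `t`; dependence is allowed),
    -- `Pinf` is the joint law `P_{F₀,∞}` with no change
    (P : ℕ → Measure (ℕ → 𝒳)) (Pinf : Measure (ℕ → 𝒳))
    (hPprob : ∀ t, IsProbabilityMeasure (P t)) (hPinfprob : IsProbabilityMeasure Pinf)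
    -- the pre-change segment `X₁, …, X_{t-1}` has the same joint law under `P t` and `Pinf`
    (hagree : ∀ t : ℕ, 1 ≤ t → ∀ s : Set (ℕ → 𝒳),
      MeasurableSet[natFilt 𝒳 (t - 1)] s → P t s = Pinf s)
    -- the observed statistic, with the convention `M_t = -∞` when `t > τ` or `τ = ∞`
    (M : ℕ → (ℕ → 𝒳) → EReal) (hMmeas : ∀ t, Measurable (M t))
    (hMbot : ∀ (t : ℕ) (ω : ℕ → 𝒳), ¬ ((t : ℕ∞) ≤ τ ω ∧ τ ω ≠ ⊤) → M t ω = ⊥)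
    (B : ℕ)
    -- the simulation space, carrying the B simulated (truncated and untruncated) statistics
    {Ωs : Type*} [MeasurableSpace Ωs] (μs : Measure Ωs) [IsProbabilityMeasure μs]
    (ML Minf : ℕ → Fin B → Ωs → EReal)
    (hMLmeas : ∀ t j, Measurable (ML t j))
    (hLB : ∀ t j w, Minf t j w ≤ ML t j w)
    -- for each fixed t, under `P_{F₀,t,F₁}` the tuple `(M_t, M_{t,∞}¹, …, M_{t,∞}^B)`
    -- is i.i.d. (it is independent of `r_t` by the product construction)
    (hiid : ∀ t : ℕ, 1 ≤ t →
      iIndepFun (simTuple B (M t) (Minf t)) ((P t).prod μs) ∧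
      ∀ i : Fin (B + 1),
        IdentDistrib (simTuple B (M t) (Minf t) i) (simTuple B (M t) (Minf t) 0)
          ((P t).prod μs) ((P t).prod μs))
    -- the auxiliary randomization carrying the estimators `r_t`
    {Ωr : Type*} [MeasurableSpace Ωr] (μr : Measure Ωr) [IsProbabilityMeasure μr]
    (r : ℕ → Ωr → ℝ) (hrmeas : ∀ t, Measurable (r t))
    (hrpos : ∀ t, ∀ᵐ a ∂μr, 0 < r t a) (hrint : ∀ t, Integrable (r t) μr)
    (hrunb : ∀ t : ℕ, ∫ a, r t a ∂μr = (Pinf {ω | (t : ℕ∞) ≤ τ ω}).toReal)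
    (α : ℝ) (hα : α ∈ Set.Ioo (0 : ℝ) 1)
    (T : ℕ) (hT : 1 ≤ T)
    (hpos : Pinf {ω | (T : ℕ∞) ≤ τ ω} ≠ 0) :
    ENNReal.ofReal (1 - α) ≤
      ProbabilityTheory.cond ((P T).prod (μs.prod μr))
        {q : (ℕ → 𝒳) × (Ωs × Ωr) | (T : ℕ∞) ≤ τ q.1}
        {q : (ℕ → 𝒳) × (Ωs × Ωr) |
          T ∈ {t : ℕ | 1 ≤ t ∧ (t : ℕ∞) ≤ τ q.1 ∧
            M t q.1 ≤ quantileStat (α * r t q.2.2)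
              ((M t q.1) ::ₘ
                Multiset.map (fun j => ML t j q.2.1) (Finset.univ : Finset (Fin B)).val)}} :=
  adaptive_known_coverage_general τ hτ P Pinf hPprob hPinfprob hagree M hMmeas B μs ML Minf hMLmeas
    hLB hiid μr r hrmeas hrpos hrint hrunb α hα T hT hpos

end SeqChange
end
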